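/- For sufficiently small ε > 0, setting γ = ε^{1/2} |log ε|^{1/2}, there is a constant C > 0 independent of ε such that R_ε(x) · 𝟙{R_ε(x) ≥ ε} ≤ C ε^{-1/2} Σ_{n∈ℤ} 𝟙[2n - Cγ, 2n + Cγ](x) for all x ∈ ℝ; that is, the periodic heat kernel R_ε exceeds ε only within distance Cγ of the even integers, where it is bounded by C ε^{-1/2}. -/

import Mathlib

open Real Set MeasureTheory
open scoped Classical

/-- The standard heat kernel on ℝ. -/
noncomputable def hk (t x : ℝ) : ℝ := (Real.sqrt (2 * Real.pi * t))⁻¹ * Real.exp (-(x ^ 2) / (2 * t))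

/-- The Neumann heat kernel on [0,1], via its 2-periodic even extension. -/
noncomputable def pneu (t x y : ℝ) : ℝ := ∑' n : ℤ, (hk t (x - y - 2 * n) + hk t (x + y - 2 * n))

/-- The 2-periodic heat kernel R_t. -/
noncomputable def Rker (t x : ℝ) : ℝ := ∑' n : ℤ, hk t (x - 2 * n)

/-- r_t(x) = ∫₀ˣ (R_t(y) - 1/2) dy. -/
noncomputable def rker (t x : ℝ) : ℝ := ∫ y in (0:ℝ)..x, (Rker t y - 1 / 2)


lemma hasSum_shift {f : ℤ → ℝ} {a : ℝ} (m : ℤ) (h : HasSum f a) :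
    HasSum (fun k : ℤ => f (k - m)) a :=
  (Equiv.hasSum_iff (Equiv.subRight m)).mpr h

lemma sumExp_bound (t x : ℝ) (ht0 : 0 < t) (ht4 : t ≤ 4) :
    Summable (fun n : ℤ => Real.exp (-((x - 2*n)^2) / t)) ∧
      (∑' n : ℤ, Real.exp (-((x - 2*n)^2) / t)) ≤ 15 := by
  set r : ℝ := Real.exp (-(2⁻¹ : ℝ)) with hrdef
  have hr0 : 0 ≤ r := (Real.exp_pos _).le
  have hr23 : r ≤ 2/3 := by
    have h1 : (3/2 : ℝ) ≤ Real.exp (2⁻¹ : ℝ) := by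
      have := Real.add_one_le_exp (2⁻¹ : ℝ); linarith
    have h2 : r = (Real.exp (2⁻¹ : ℝ))⁻¹ := by rw [hrdef, Real.exp_neg]
    rw [h2]
    have h3 : (0:ℝ) < 3/2 := by norm_num
    calc (Real.exp (2⁻¹:ℝ))⁻¹ ≤ (3/2 : ℝ)⁻¹ := inv_anti₀ h3 h1
      _ ≤ 2/3 := by norm_num
  have hr1 : r < 1 := lt_of_le_of_lt hr23 (by norm_num)
  -- geometric base sum over ℤ
  have hbase : HasSum (fun k : ℤ => r ^ k.natAbs) ((1-r)⁻¹ + r * (1-r)⁻¹) := by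
    apply HasSum.of_nat_of_neg_add_one (f := fun k : ℤ => r ^ k.natAbs)
    · have h := hasSum_geometric_of_lt_one hr0 hr1
      have e1 : (fun n : ℕ => r ^ ((n : ℤ)).natAbs) = fun n : ℕ => r ^ n := by
        funext n; simp
      exact e1 ▸ h
    · have h := (hasSum_geometric_of_lt_one hr0 hr1).mul_left r
      have e1 : (fun n : ℕ => r ^ ((-((n : ℤ) + 1))).natAbs) = fun n : ℕ => r * r ^ n := by
        funext n
        have : ((-((n : ℤ) + 1))).natAbs = n + 1 := by omega
        rw [this, pow_succ]; ring
      exact e1 ▸ h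
  set m : ℤ := round (x/2) with hmdef
  set g : ℤ → ℝ := fun k => Real.exp (4⁻¹ : ℝ) * r ^ (k - m).natAbs with hgdef
  have hg : HasSum g (Real.exp (4⁻¹:ℝ) * ((1-r)⁻¹ + r * (1-r)⁻¹)) := by
    have h1 := hasSum_shift m hbase
    exact h1.mul_left _
  have hdm : |x - 2*m| ≤ 1 := by
    have h := abs_sub_round (x/2)
    have h2 : x - 2*m = 2 * (x/2 - round (x/2)) := by rw [hmdef]; ring
    rw [h2, abs_mul, abs_two]
    linarith
  have hcomp : ∀ n : ℤ, Real.exp (-((x - 2*n)^2) / t) ≤ g n := by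
    intro n
    by_cases hn : n = m
    · rw [hn]
      have h1 : Real.exp (-((x - 2*(m:ℝ))^2) / t) ≤ 1 := by
        rw [show (1:ℝ) = Real.exp 0 from (Real.exp_zero).symm]
        apply Real.exp_le_exp.mpr
        exact div_nonpos_of_nonpos_of_nonneg (neg_nonpos.mpr (sq_nonneg _)) ht0.le
      have h2 : (1:ℝ) ≤ g m := by
        simp only [hgdef, sub_self, Int.natAbs_zero, pow_zero, mul_one]
        exact Real.one_le_exp (by norm_num)
      linarith
    · set k : ℕ := (n - m).natAbs with hkdef
      have hk1 : 1 ≤ k := by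
        rw [hkdef]
        have : n - m ≠ 0 := sub_ne_zero.mpr hn
        omega
      have hK1 : (1:ℝ) ≤ (k:ℝ) := by exact_mod_cast hk1
      have habs : 2*(k:ℝ) - 1 ≤ |x - 2*n| := by
        have h1 : |(2:ℝ)*n - 2*m| ≤ |x - 2*n| + |x - 2*m| := by
          calc |(2:ℝ)*n - 2*m| = |(2*n - x) + (x - 2*m)| := by ring_nf
            _ ≤ |(2:ℝ)*n - x| + |x - 2*m| := abs_add_le _ _
            _ = |x - 2*n| + |x - 2*m| := by rw [abs_sub_comm]
        have h2 : |(2:ℝ)*n - 2*m| = 2*(k:ℝ) := by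
          have : (2:ℝ)*n - 2*m = 2 * ((n : ℝ) - m) := by ring
          rw [this, abs_mul, abs_two]
          congr 1
          rw [hkdef, Nat.cast_natAbs]
          push_cast
          ring
        linarith
      have hsq : 2*(k:ℝ) - 1 ≤ (x - 2*n)^2 := by
        have h1 : (1:ℝ) ≤ |x - 2*n| := by linarith
        have h2 : (2*(k:ℝ) - 1)^2 ≤ |x - 2*n|^2 := by
          apply pow_le_pow_left₀ (by linarith) habs
        have h3 : |x - 2*n|^2 = (x - 2*n)^2 := sq_abs _
        nlinarith
      have hdiv : (2*(k:ℝ) - 1)/4 ≤ ((x - 2*n)^2) / t := by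
        rw [div_le_div_iff₀ (by norm_num) ht0]
        nlinarith
      calc Real.exp (-((x - 2*n)^2) / t) ≤ Real.exp (-((2*(k:ℝ) - 1)/4)) := by
            apply Real.exp_le_exp.mpr
            rw [neg_div]
            linarith
        _ = g n := by
            rw [hgdef]
            simp only
            rw [← hkdef, show -((2*(k:ℝ) - 1)/4) = 4⁻¹ + (k:ℝ) * (-(2⁻¹:ℝ)) by ring,
              Real.exp_add, Real.exp_nat_mul]
    -- end hcomp
  have hsum : Summable (fun n : ℤ => Real.exp (-((x - 2*n)^2) / t)) :=
    Summable.of_nonneg_of_le (fun n => (Real.exp_pos _).le) hcomp hg.summable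
  refine ⟨hsum, ?_⟩
  have h1 : (∑' n : ℤ, Real.exp (-((x - 2*n)^2) / t)) ≤ ∑' n, g n :=
    Summable.tsum_le_tsum hcomp hsum hg.summable
  rw [hg.tsum_eq] at h1
  have hinv3 : (1-r)⁻¹ ≤ 3 := by
    have h13 : (1:ℝ)/3 ≤ 1 - r := by linarith
    calc (1-r)⁻¹ ≤ ((1:ℝ)/3)⁻¹ := inv_anti₀ (by norm_num) h13
      _ = 3 := by norm_num
  have hinv0 : 0 ≤ (1-r)⁻¹ := inv_nonneg.mpr (by linarith)
  have hS5 : (1-r)⁻¹ + r * (1-r)⁻¹ ≤ 5 := by nlinarith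
  have hexp3 : Real.exp (4⁻¹:ℝ) ≤ 3 := by
    calc Real.exp (4⁻¹:ℝ) ≤ Real.exp 1 := Real.exp_le_exp.mpr (by norm_num)
      _ ≤ 3 := by linarith [Real.exp_one_lt_d9]
  have hexp0 : 0 ≤ Real.exp (4⁻¹:ℝ) := (Real.exp_pos _).le
  have hS0 : 0 ≤ (1-r)⁻¹ + r * (1-r)⁻¹ := by nlinarith
  nlinarith

lemma Rker_eq (t x : ℝ) :
    Rker t x = (Real.sqrt (2 * Real.pi * t))⁻¹ *
      ∑' n : ℤ, Real.exp (-((x - 2*n)^2) / (2*t)) := by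
  simp only [Rker, hk]
  exact tsum_mul_left

theorem Rker_indicator_bound :
    ∃ C : ℝ, 0 < C ∧ ∃ ε₀ : ℝ, 0 < ε₀ ∧ ∀ ε : ℝ, 0 < ε → ε < ε₀ → ∀ x : ℝ,
      Set.indicator {x' : ℝ | ε ≤ Rker ε x'} (Rker ε) x ≤
        C * (Real.sqrt ε)⁻¹ *
          ∑' n : ℤ, Set.indicator
            (Set.Icc (2 * n - C * (Real.sqrt ε * Real.sqrt |Real.log ε|))
                     (2 * n + C * (Real.sqrt ε * Real.sqrt |Real.log ε|)))
            (fun _ => (1:ℝ)) x := by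
  refine ⟨7, by norm_num, 1/100000, by norm_num, ?_⟩
  intro ε hε hε₀ x
  set γ : ℝ := Real.sqrt ε * Real.sqrt |Real.log ε| with hγdef
  have hε1 : ε < 1 := lt_trans hε₀ (by norm_num)
  have hsε : 0 < Real.sqrt ε := Real.sqrt_pos.mpr hε
  have hγ0 : 0 ≤ γ := mul_nonneg (Real.sqrt_nonneg _) (Real.sqrt_nonneg _)
  have hγsq : γ^2 = ε * |Real.log ε| := by
    rw [hγdef, mul_pow, Real.sq_sqrt hε.le, Real.sq_sqrt (abs_nonneg _)]
  have hlog : |Real.log ε| ≤ 2 * (Real.sqrt ε)⁻¹ := by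
    have h1 : Real.log ε < 0 := Real.log_neg hε hε1
    have h2 : |Real.log ε| = Real.log ε⁻¹ := by
      rw [abs_of_neg h1, Real.log_inv]
    have h3 : Real.log ε⁻¹ = 2 * Real.log (Real.sqrt ε⁻¹) := by
      rw [Real.log_sqrt (by positivity)]; ring
    have h4 : Real.log (Real.sqrt ε⁻¹) ≤ Real.sqrt ε⁻¹ - 1 :=
      Real.log_le_sub_one_of_pos (Real.sqrt_pos.mpr (by positivity))
    have h5 : Real.sqrt ε⁻¹ = (Real.sqrt ε)⁻¹ := Real.sqrt_inv ε
    rw [h2, h3, h5]; rw [h5] at h4; linarith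
  have hes : ε * (Real.sqrt ε)⁻¹ = Real.sqrt ε := by
    rw [← Real.mul_self_sqrt hε.le]
    field_simp
    rw [Real.sqrt_sq (Real.sqrt_nonneg _)]
  have hγsq' : γ^2 ≤ 2 * Real.sqrt ε := by
    have h1 : ε * |Real.log ε| ≤ ε * (2 * (Real.sqrt ε)⁻¹) :=
      mul_le_mul_of_nonneg_left hlog hε.le
    calc γ^2 = ε * |Real.log ε| := hγsq
      _ ≤ ε * (2 * (Real.sqrt ε)⁻¹) := h1
      _ = 2 * (ε * (Real.sqrt ε)⁻¹) := by ring
      _ = 2 * Real.sqrt ε := by rw [hes]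
  have hsεsmall : Real.sqrt ε ≤ 1/100 := by
    have h1 : Real.sqrt ε ≤ Real.sqrt (1/10000) := Real.sqrt_le_sqrt (by linarith)
    have h2 : Real.sqrt (1/10000) = 1/100 := by
      rw [show (1/10000:ℝ) = (1/100)^2 by norm_num, Real.sqrt_sq (by norm_num)]
    linarith
  have h7γ : 7 * γ < 1 := by nlinarith [hγsq', hsεsmall, hγ0]
  set m : ℤ := round (x/2) with hmdef
  have hdm : |x - 2*m| ≤ 1 := by
    have h := abs_sub_round (x/2)
    have h2 : x - 2*m = 2 * (x/2 - round (x/2)) := by rw [hmdef]; ring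
    rw [h2, abs_mul, abs_two]
    linarith
  have hS2 := sumExp_bound (2*ε) x (by linarith) (by linarith)
  have hcoefpos : 0 < Real.sqrt (2*Real.pi*ε) :=
    Real.sqrt_pos.mpr (by positivity)
  have hRkeq := Rker_eq ε x
  have hSnn : 0 ≤ ∑' n : ℤ, Real.exp (-((x - 2*n)^2) / (2*ε)) :=
    tsum_nonneg fun n => (Real.exp_pos _).le
  have hRnonneg : 0 ≤ Rker ε x := by
    rw [hRkeq]
    exact mul_nonneg (inv_nonneg.mpr (Real.sqrt_nonneg _)) hSnn
  have hindnn : ∀ n : ℤ, 0 ≤ Set.indicator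
      (Set.Icc (2 * (n:ℝ) - 7 * γ) (2 * n + 7 * γ)) (fun _ => (1:ℝ)) x :=
    fun n => Set.indicator_nonneg (fun _ _ => zero_le_one) x
  have hRHSnonneg : 0 ≤ 7 * (Real.sqrt ε)⁻¹ *
      ∑' n : ℤ, Set.indicator
        (Set.Icc (2 * (n:ℝ) - 7 * γ) (2 * n + 7 * γ)) (fun _ => (1:ℝ)) x :=
    mul_nonneg (by positivity) (tsum_nonneg hindnn)
  by_cases hcase : |x - 2*m| ≤ 7*γ
  · -- x is close to the even integer 2m
    have hxmem : x ∈ Set.Icc (2*(m:ℝ) - 7*γ) (2*m + 7*γ) := by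
      obtain ⟨h1, h2⟩ := abs_le.mp hcase
      exact ⟨by linarith, by linarith⟩
    have hind : ∀ n : ℤ, n ∉ ({m} : Finset ℤ) →
        Set.indicator (Set.Icc (2*(n:ℝ) - 7*γ) (2*n + 7*γ)) (fun _ => (1:ℝ)) x = 0 := by
      intro n hn
      simp only [Finset.mem_singleton] at hn
      apply Set.indicator_of_notMem
      intro hmem
      obtain ⟨h1, h2⟩ := hmem
      have h3 : |x - 2*(n:ℝ)| ≤ 7*γ := abs_le.mpr ⟨by linarith, by linarith⟩
      have h4 : |2*(n:ℝ) - 2*m| ≤ |x - 2*(n:ℝ)| + |x - 2*m| := by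
        calc |2*(n:ℝ) - 2*m| = |(2*(n:ℝ) - x) + (x - 2*m)| := by ring_nf
          _ ≤ |2*(n:ℝ) - x| + |x - 2*m| := abs_add_le _ _
          _ = |x - 2*(n:ℝ)| + |x - 2*m| := by rw [abs_sub_comm]
      have h5 : |2*(n:ℝ) - 2*m| < 2 := by linarith
      have h6 : |(n:ℝ) - m| < 1 := by
        have : 2*(n:ℝ) - 2*m = 2 * ((n:ℝ) - m) := by ring
        rw [this, abs_mul, abs_two] at h5
        linarith
      have h8 : |n - m| < (1:ℤ) := by
        by_contra hcon
        push_neg at hcon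
        have h9 : (1:ℝ) ≤ |(n:ℝ) - m| := by exact_mod_cast hcon
        linarith
      rw [abs_lt] at h8
      omega
    have hsummind : Summable (fun n : ℤ =>
        Set.indicator (Set.Icc (2*(n:ℝ) - 7*γ) (2*n + 7*γ)) (fun _ => (1:ℝ)) x) :=
      summable_of_ne_finset_zero hind
    have hge1 : (1:ℝ) ≤ ∑' n : ℤ,
        Set.indicator (Set.Icc (2*(n:ℝ) - 7*γ) (2*n + 7*γ)) (fun _ => (1:ℝ)) x := by
      have h := Summable.le_tsum hsummind m (fun j _ => hindnn j)
      rwa [Set.indicator_of_mem hxmem] at h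
    have hRb : Rker ε x ≤ 7 * (Real.sqrt ε)⁻¹ := by
      rw [hRkeq]
      have hq : 0 < Real.sqrt (2*Real.pi) := Real.sqrt_pos.mpr (by positivity)
      have h24 : (2.4:ℝ) ≤ Real.sqrt (2*Real.pi) := by
        rw [show (2.4:ℝ) = Real.sqrt (2.4^2) from (Real.sqrt_sq (by norm_num)).symm]
        apply Real.sqrt_le_sqrt
        nlinarith [Real.pi_gt_three]
      have hinvq : (Real.sqrt (2*Real.pi))⁻¹ ≤ (2.4:ℝ)⁻¹ :=
        inv_anti₀ (by norm_num) h24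
      have hsplit : Real.sqrt (2*Real.pi*ε) = Real.sqrt (2*Real.pi) * Real.sqrt ε := by
        rw [← Real.sqrt_mul (by positivity)]
      rw [hsplit, mul_inv]
      calc (Real.sqrt (2*Real.pi))⁻¹ * (Real.sqrt ε)⁻¹ *
            (∑' n : ℤ, Real.exp (-((x - 2*n)^2) / (2*ε)))
          ≤ (2.4:ℝ)⁻¹ * (Real.sqrt ε)⁻¹ * 15 := by
            apply mul_le_mul _ hS2.2 hSnn (by positivity)
            exact mul_le_mul_of_nonneg_right hinvq (inv_nonneg.mpr (Real.sqrt_nonneg _))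
        _ = ((2.4:ℝ)⁻¹ * 15) * (Real.sqrt ε)⁻¹ := by ring
        _ ≤ 7 * (Real.sqrt ε)⁻¹ := by
            apply mul_le_mul_of_nonneg_right (by norm_num)
              (inv_nonneg.mpr (Real.sqrt_nonneg _))
    have hLHS : Set.indicator {x' : ℝ | ε ≤ Rker ε x'} (Rker ε) x ≤ Rker ε x :=
      Set.indicator_apply_le' (fun _ => le_refl _) (fun _ => hRnonneg)
    have hfin : 7 * (Real.sqrt ε)⁻¹ ≤ 7 * (Real.sqrt ε)⁻¹ *
        ∑' n : ℤ, Set.indicator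
          (Set.Icc (2 * (n:ℝ) - 7 * γ) (2 * n + 7 * γ)) (fun _ => (1:ℝ)) x :=
      le_mul_of_one_le_right (by positivity) hge1
    calc Set.indicator {x' : ℝ | ε ≤ Rker ε x'} (Rker ε) x ≤ Rker ε x := hLHS
      _ ≤ 7 * (Real.sqrt ε)⁻¹ := hRb
      _ ≤ _ := hfin
  · -- x is far from every even integer: Rker ε x < ε
    push_neg at hcase
    set d : ℝ := |x - 2*m| with hddef
    have hd0 : 0 ≤ d := abs_nonneg _
    have hdle : ∀ n : ℤ, d ≤ |x - 2*(n:ℝ)| := by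
      intro n
      by_cases hn : n = m
      · rw [hn]
      · have h1 : (1:ℤ) ≤ |n - m| := Int.one_le_abs (sub_ne_zero.mpr hn)
        have h2 : (1:ℝ) ≤ |(n:ℝ) - m| := by exact_mod_cast h1
        have h4 : |2*(n:ℝ) - 2*m| ≤ |x - 2*(n:ℝ)| + |x - 2*m| := by
          calc |2*(n:ℝ) - 2*m| = |(2*(n:ℝ) - x) + (x - 2*m)| := by ring_nf
            _ ≤ |2*(n:ℝ) - x| + |x - 2*m| := abs_add_le _ _
            _ = |x - 2*(n:ℝ)| + |x - 2*m| := by rw [abs_sub_comm]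
        have h5 : (2:ℝ) ≤ |2*(n:ℝ) - 2*m| := by
          have : 2*(n:ℝ) - 2*m = 2 * ((n:ℝ) - m) := by ring
          rw [this, abs_mul, abs_two]
          linarith
        have h6 : d ≤ 1 := hdm
        have h7 : 1 ≤ |x - 2*(n:ℝ)| := by linarith
        linarith
    have hS4 := sumExp_bound (4*ε) x (by linarith) (by linarith)
    have hterm : ∀ n : ℤ, Real.exp (-((x - 2*n)^2) / (2*ε)) ≤
        Real.exp (-(d^2) / (4*ε)) * Real.exp (-((x - 2*n)^2) / (4*ε)) := by
      intro n
      rw [← Real.exp_add]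
      apply Real.exp_le_exp.mpr
      have h1 : d^2 ≤ (x - 2*(n:ℝ))^2 := by
        nlinarith [hdle n, sq_abs (x - 2*(n:ℝ)), abs_nonneg (x - 2*(n:ℝ))]
      have h2 : -((x - 2*(n:ℝ))^2) / (2*ε) =
          -((x - 2*(n:ℝ))^2) / (4*ε) + -((x - 2*(n:ℝ))^2) / (4*ε) := by
        field_simp
        ring
      rw [h2]
      have h4ε : (0:ℝ) < 4*ε := by positivity
      have h3 : -((x - 2*(n:ℝ))^2) / (4*ε) ≤ -(d^2) / (4*ε) :=
        (div_le_div_iff_of_pos_right h4ε).mpr (by linarith)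
      linarith
    have hsum2le : (∑' n : ℤ, Real.exp (-((x - 2*n)^2) / (2*ε))) ≤
        Real.exp (-(d^2) / (4*ε)) * 15 := by
      calc (∑' n : ℤ, Real.exp (-((x - 2*n)^2) / (2*ε)))
          ≤ ∑' n : ℤ, Real.exp (-(d^2) / (4*ε)) * Real.exp (-((x - 2*n)^2) / (4*ε)) :=
            Summable.tsum_le_tsum hterm hS2.1 (hS4.1.mul_left _)
        _ = Real.exp (-(d^2) / (4*ε)) * ∑' n : ℤ, Real.exp (-((x - 2*n)^2) / (4*ε)) :=
            tsum_mul_left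
        _ ≤ Real.exp (-(d^2) / (4*ε)) * 15 :=
            mul_le_mul_of_nonneg_left hS4.2 (Real.exp_pos _).le
    have hexpd : Real.exp (-(d^2) / (4*ε)) ≤ ε^4 := by
      have hla : |Real.log ε| = -Real.log ε := abs_of_neg (Real.log_neg hε hε1)
      have h1 : 16 * (ε * (-Real.log ε)) ≤ d^2 := by
        have h49 : 49 * γ^2 ≤ d^2 := by
          calc 49 * γ^2 = (7*γ) * (7*γ) := by ring
            _ ≤ d * d := mul_self_le_mul_self (by positivity) hcase.le
            _ = d^2 := by ring
        have heq := hγsq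
        rw [hla] at heq
        have hnn : 0 ≤ ε * (-Real.log ε) :=
          mul_nonneg hε.le (neg_nonneg.mpr (Real.log_neg hε hε1).le)
        linarith [heq ▸ hnn, heq ▸ h49]
      have h2 : -(d^2) / (4*ε) ≤ 4 * Real.log ε := by
        rw [div_le_iff₀ (by positivity : (0:ℝ) < 4*ε)]
        have : 16 * (ε * (-Real.log ε)) = -(4 * Real.log ε * (4 * ε)) := by ring
        linarith [this ▸ h1]
      calc Real.exp (-(d^2) / (4*ε)) ≤ Real.exp (4 * Real.log ε) := Real.exp_le_exp.mpr h2
        _ = ε^4 := by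
          rw [show (4:ℝ) * Real.log ε = ((4:ℕ):ℝ) * Real.log ε by norm_num,
            Real.exp_nat_mul, Real.exp_log hε]
    have hRlt : Rker ε x < ε := by
      rw [hRkeq]
      have hinvle : (Real.sqrt (2*Real.pi*ε))⁻¹ ≤ ε⁻¹ := by
        apply inv_anti₀ hε
        calc ε = Real.sqrt (ε^2) := (Real.sqrt_sq hε.le).symm
          _ ≤ Real.sqrt (2*Real.pi*ε) := by
              apply Real.sqrt_le_sqrt
              have hπ := Real.pi_gt_three
              have h1 : ε * ε ≤ 1 * ε := mul_le_mul_of_nonneg_right hε1.le hε.le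
              have h2 : 1 * ε ≤ (2*Real.pi) * ε :=
                mul_le_mul_of_nonneg_right (by linarith) hε.le
              calc ε^2 = ε * ε := by ring
                _ ≤ 1 * ε := h1
                _ ≤ (2*Real.pi) * ε := h2
                _ = 2*Real.pi*ε := by ring
      have hSle : (∑' n : ℤ, Real.exp (-((x - 2*n)^2) / (2*ε))) ≤ ε^4 * 15 := by
        have h15 : Real.exp (-(d^2) / (4*ε)) * 15 ≤ ε^4 * 15 :=
          mul_le_mul_of_nonneg_right hexpd (by norm_num)
        linarith [hsum2le]
      have hstep : (Real.sqrt (2*Real.pi*ε))⁻¹ *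
          (∑' n : ℤ, Real.exp (-((x - 2*n)^2) / (2*ε))) ≤ ε⁻¹ * (ε^4 * 15) :=
        mul_le_mul hinvle hSle hSnn (by positivity)
      have heq : ε⁻¹ * (ε^4 * 15) = 15 * ε^3 := by
        field_simp
      have hlast : 15 * ε^3 < ε := by
        have h3 : ε*ε ≤ 1*ε := mul_le_mul_of_nonneg_right hε1.le hε.le
        have h4 : 15*(ε*ε) < 1 := by linarith
        have h5 : 15*ε^3 = (15*(ε*ε))*ε := by ring
        rw [h5]
        calc (15*(ε*ε))*ε < 1*ε := mul_lt_mul_of_pos_right h4 hε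
          _ = ε := one_mul ε
      calc (Real.sqrt (2*Real.pi*ε))⁻¹ *
            (∑' n : ℤ, Real.exp (-((x - 2*n)^2) / (2*ε))) ≤ ε⁻¹ * (ε^4 * 15) := hstep
        _ = 15 * ε^3 := heq
        _ < ε := hlast
    have hnotmem : x ∉ {x' : ℝ | ε ≤ Rker ε x'} := by
      simp only [Set.mem_setOf_eq, not_le]
      exact hRlt
    rw [Set.indicator_of_notMem hnotmem]
    exact hRHSnonneg
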